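/- arXiv:0903.2627 — 3 statements merged into one kernel-verified Lean document; each statement's English description precedes it below -/
import Mathlib

section
/- In a double P-module, the vertical composition of quintuples (m : u ᵃ_c v) ∘₁ (p : x ᶜ_e y) := (p mʸ : ux ᵃ_e vy) is well-defined: if av = ucm and cy = xep evaluated in P, then a(vy) = (ux)e(p mʸ) evaluated in P. -/
/-- A double `P`-module: categories `M`, `H`, `V`, `P` on the same object set,
identity-on-objects functors `μ : M → P`, `φ : H → P`, `ψ : V → P`, with `M`
totally intransitive (a family of monoids `M x`), together with right actions
of `H` and `V` on `M`, satisfying axioms (i) and (ii). -/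
structure DoubleModule where
  Obj : Type
  M : Obj → Type
  instM : ∀ x, Monoid (M x)
  H : Obj → Obj → Type
  V : Obj → Obj → Type
  P : Obj → Obj → Type
  idH : ∀ x, H x x
  idV : ∀ x, V x x
  idP : ∀ x, P x x
  compH : ∀ {x y z}, H x y → H y z → H x z
  compV : ∀ {x y z}, V x y → V y z → V x z
  compP : ∀ {x y z}, P x y → P y z → P x z
  compH_assoc : ∀ {w x y z} (f : H w x) (g : H x y) (h : H y z),
    compH (compH f g) h = compH f (compH g h)
  idH_comp : ∀ {x y} (f : H x y), compH (idH x) f = f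
  comp_idH : ∀ {x y} (f : H x y), compH f (idH y) = f
  compV_assoc : ∀ {w x y z} (f : V w x) (g : V x y) (h : V y z),
    compV (compV f g) h = compV f (compV g h)
  idV_comp : ∀ {x y} (f : V x y), compV (idV x) f = f
  comp_idV : ∀ {x y} (f : V x y), compV f (idV y) = f
  compP_assoc : ∀ {w x y z} (f : P w x) (g : P x y) (h : P y z),
    compP (compP f g) h = compP f (compP g h)
  idP_comp : ∀ {x y} (f : P x y), compP (idP x) f = f
  comp_idP : ∀ {x y} (f : P x y), compP f (idP y) = f
  mu : ∀ {x}, M x → P x x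
  phi : ∀ {x y}, H x y → P x y
  psi : ∀ {x y}, V x y → P x y
  mu_one : ∀ x, mu (1 : M x) = idP x
  mu_mul : ∀ {x} (m n : M x), mu (m * n) = compP (mu m) (mu n)
  phi_id : ∀ x, phi (idH x) = idP x
  phi_comp : ∀ {x y z} (f : H x y) (g : H y z), phi (compH f g) = compP (phi f) (phi g)
  psi_id : ∀ x, psi (idV x) = idP x
  psi_comp : ∀ {x y z} (f : V x y) (g : V y z), psi (compV f g) = compP (psi f) (psi g)
  actH : ∀ {x y}, M x → H x y → M y
  actV : ∀ {x y}, M x → V x y → M y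
  actH_one : ∀ {x y} (d : H x y), actH 1 d = 1
  actH_mul : ∀ {x y} (m n : M x) (d : H x y), actH (m * n) d = actH m d * actH n d
  actH_id : ∀ {x} (m : M x), actH m (idH x) = m
  actH_comp : ∀ {x y z} (m : M x) (d : H x y) (f : H y z),
    actH m (compH d f) = actH (actH m d) f
  actV_one : ∀ {x y} (d : V x y), actV 1 d = 1
  actV_mul : ∀ {x y} (m n : M x) (d : V x y), actV (m * n) d = actV m d * actV n d
  actV_id : ∀ {x} (m : M x), actV m (idV x) = m
  actV_comp : ∀ {x y z} (m : M x) (d : V x y) (f : V y z),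
    actV m (compV d f) = actV (actV m d) f
  /-- axiom (i) for `H` : `md = d mᵈ` evaluated in `P`. -/
  ax1H : ∀ {x y} (m : M x) (d : H x y),
    compP (mu m) (phi d) = compP (phi d) (mu (actH m d))
  /-- axiom (i) for `V` : `my = y mʸ` evaluated in `P`. -/
  ax1V : ∀ {x y} (m : M x) (yv : V x y),
    compP (mu m) (psi yv) = compP (psi yv) (mu (actV m yv))
  /-- axiom (ii) : if `dz = yfq` evaluated in `P` then `mʸᶠ q = q mᵈᶻ` in `M`. -/
  ax2 : ∀ {s y1 z1 w} (m : M s) (d : H s y1) (z : V y1 w) (yv : V s z1)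
    (f : H z1 w) (q : M w),
    compP (phi d) (psi z) = compP (psi yv) (compP (phi f) (mu q)) →
    actH (actV m yv) f * q = q * actV (actH m d) z

attribute [instance] DoubleModule.instM

namespace DoubleModule

variable (D : DoubleModule)

theorem compP_compP_of_eq {w x y z : D.Obj} {f : D.P w x} {g : D.P x y} {h : D.P w y}
    (hfg : D.compP f g = h) (k : D.P y z) : D.compP f (D.compP g k) = D.compP h k := by
  rw [← D.compP_assoc, hfg]

end DoubleModule

/-- In a double `P`-module the vertical composition of quintuples
`(m : u ᵃ_c v) ∘₁ (p : x ᶜ_e y) := (p mʸ : ux ᵃ_e vy)` is well defined: if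
`av = ucm` and `cy = xep` evaluated in `P`, then `a(vy) = (ux)e(p mʸ)`
evaluated in `P`. -/
theorem DoubleModule.vcomp_well_defined (D : DoubleModule)
    {p0 q0 r0 s0 t0 w0 : D.Obj}
    (a : D.H p0 q0) (c : D.H r0 s0) (e : D.H t0 w0)
    (u : D.V p0 r0) (v : D.V q0 s0) (x : D.V r0 t0) (y : D.V s0 w0)
    (m : D.M s0) (p : D.M w0)
    (h1 : D.compP (D.phi a) (D.psi v)
        = D.compP (D.psi u) (D.compP (D.phi c) (D.mu m)))
    (h2 : D.compP (D.phi c) (D.psi y)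
        = D.compP (D.psi x) (D.compP (D.phi e) (D.mu p))) :
    D.compP (D.phi a) (D.psi (D.compV v y))
      = D.compP (D.psi (D.compV u x)) (D.compP (D.phi e) (D.mu (p * D.actV m y))) := by
  calc D.compP (D.phi a) (D.psi (D.compV v y))
      = D.compP (D.psi u) (D.compP (D.phi c) (D.compP (D.mu m) (D.psi y))) := by
        rw [D.psi_comp, D.compP_compP_of_eq h1]
        simp only [D.compP_assoc]
    _ = D.compP (D.psi u) (D.compP (D.phi c) (D.compP (D.psi y) (D.mu (D.actV m y)))) := by
        rw [D.ax1V]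
    _ = D.compP (D.psi (D.compV u x)) (D.compP (D.phi e) (D.mu (p * D.actV m y))) := by
        rw [D.compP_compP_of_eq h2, D.mu_mul, D.psi_comp]
        simp only [D.compP_assoc]
end

section
/- In the special case of a double P-module with V = P and ψ = id, the structure μ: M → P with the action of P on M is a crossed module: μ(mᵖ) = p⁻¹ μ(m) p for all m ∈ M, p ∈ P (when defined), and m⁻¹ n m = n^{μ(m)} for all m, n ∈ M in the same fibre (when M, P are groupoids). -/
/-- A double `P`-module (with `M`, `H`, `P` groupoids on the same objects) in
the special case `V = P`, `ψ = id`: the data is `μ : M → P`, `φ : H → P`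
together with actions of `P` and of `H` on `M`, satisfying axiom (i)
(`md = d mᵈ`, `mp = p mᵖ` evaluated in `P`) and axiom (ii)
(`pfq = dz` in `P` implies `mᵖᶠ q = q mᵈᶻ` in `M`). -/
structure VEqPModule where
  Obj : Type
  M : Obj → Type
  instM : ∀ x, Group (M x)
  H : Obj → Obj → Type
  P : Obj → Obj → Type
  idH : ∀ x, H x x
  idP : ∀ x, P x x
  compH : ∀ {x y z}, H x y → H y z → H x z
  compP : ∀ {x y z}, P x y → P y z → P x z
  invH : ∀ {x y}, H x y → H y x
  invP : ∀ {x y}, P x y → P y x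
  compH_assoc : ∀ {w x y z} (f : H w x) (g : H x y) (h : H y z),
    compH (compH f g) h = compH f (compH g h)
  idH_comp : ∀ {x y} (f : H x y), compH (idH x) f = f
  comp_idH : ∀ {x y} (f : H x y), compH f (idH y) = f
  comp_invH : ∀ {x y} (f : H x y), compH f (invH f) = idH x
  invH_comp : ∀ {x y} (f : H x y), compH (invH f) f = idH y
  compP_assoc : ∀ {w x y z} (f : P w x) (g : P x y) (h : P y z),
    compP (compP f g) h = compP f (compP g h)
  idP_comp : ∀ {x y} (f : P x y), compP (idP x) f = f
  comp_idP : ∀ {x y} (f : P x y), compP f (idP y) = f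
  comp_invP : ∀ {x y} (f : P x y), compP f (invP f) = idP x
  invP_comp : ∀ {x y} (f : P x y), compP (invP f) f = idP y
  mu : ∀ {x}, M x → P x x
  phi : ∀ {x y}, H x y → P x y
  mu_one : ∀ x, mu (1 : M x) = idP x
  mu_mul : ∀ {x} (m n : M x), mu (m * n) = compP (mu m) (mu n)
  phi_id : ∀ x, phi (idH x) = idP x
  phi_comp : ∀ {x y z} (f : H x y) (g : H y z), phi (compH f g) = compP (phi f) (phi g)
  actH : ∀ {x y}, M x → H x y → M y
  actP : ∀ {x y}, M x → P x y → M y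
  actH_one : ∀ {x y} (d : H x y), actH 1 d = 1
  actH_mul : ∀ {x y} (m n : M x) (d : H x y), actH (m * n) d = actH m d * actH n d
  actH_id : ∀ {x} (m : M x), actH m (idH x) = m
  actH_comp : ∀ {x y z} (m : M x) (d : H x y) (f : H y z),
    actH m (compH d f) = actH (actH m d) f
  actP_one : ∀ {x y} (p : P x y), actP 1 p = 1
  actP_mul : ∀ {x y} (m n : M x) (p : P x y), actP (m * n) p = actP m p * actP n p
  actP_id : ∀ {x} (m : M x), actP m (idP x) = m
  actP_comp : ∀ {x y z} (m : M x) (p : P x y) (r : P y z),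
    actP m (compP p r) = actP (actP m p) r
  ax1H : ∀ {x y} (m : M x) (d : H x y),
    compP (mu m) (phi d) = compP (phi d) (mu (actH m d))
  ax1P : ∀ {x y} (m : M x) (p : P x y),
    compP (mu m) p = compP p (mu (actP m p))
  ax2 : ∀ {s y1 z1 w} (m : M s) (d : H s y1) (z : P y1 w) (p : P s z1)
    (f : H z1 w) (q : M w),
    compP (phi d) z = compP p (compP (phi f) (mu q)) →
    actH (actP m p) f * q = q * actP (actH m d) z

attribute [instance] VEqPModule.instM

namespace VEqPModule

variable (D : VEqPModule)

theorem eq_invP_compP_of_compP_eq {x y z : D.Obj} {p : D.P x y} {a : D.P y z}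
    {b : D.P x z} (h : D.compP p a = b) : a = D.compP (D.invP p) b := by
  rw [← h, ← D.compP_assoc, D.invP_comp, D.idP_comp]

theorem mu_actP {x y : D.Obj} (m : D.M x) (p : D.P x y) :
    D.mu (D.actP m p) = D.compP (D.invP p) (D.compP (D.mu m) p) :=
  D.eq_invP_compP_of_compP_eq (D.ax1P m p).symm

theorem mul_eq_mul_actP_mu {x : D.Obj} (m n : D.M x) : n * m = m * D.actP n (D.mu m) := by
  have h := D.ax2 n (D.idH x) (D.mu m) (D.idP x) (D.idH x) m
    (by rw [D.phi_id, D.idP_comp, D.idP_comp])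
  rwa [D.actP_id, D.actH_id] at h

theorem actP_mu {x : D.Obj} (m n : D.M x) : D.actP n (D.mu m) = m⁻¹ * n * m := by
  rw [mul_assoc, D.mul_eq_mul_actP_mu m n, inv_mul_cancel_left]

end VEqPModule

/-- In the case `V = P`, `ψ = id`, the axioms of a double `P`-module imply
that `μ : M → P` with the action of `P` on `M` is a crossed module:
`μ(mᵖ) = p⁻¹ μ(m) p` and `n^{μ(m)} = m⁻¹ n m`. -/
theorem VEqPModule.crossed_module (D : VEqPModule) :
    (∀ {x y : D.Obj} (m : D.M x) (p : D.P x y),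
      D.mu (D.actP m p) = D.compP (D.invP p) (D.compP (D.mu m) p)) ∧
    (∀ {x : D.Obj} (m n : D.M x), D.actP n (D.mu m) = m⁻¹ * n * m) :=
  ⟨D.mu_actP, D.actP_mu⟩
end

section
/- A semicore diagram (μ: M → P a crossed module, η: M ↪ H, φ: H → P with φη = μ and h⁻¹mh = m^{φ(h)}) determines a double P-module with V = P: the action of P on M is the crossed module action, the action of H on M is mʰ := m^{φ(h)}, and axioms (i) and (ii) of a double P-module hold. -/
/-!
Both axioms follow from the crossed-module identities alone. Axiom (i) is the equivariance
`μ(mᵖ) = p⁻¹ μ(m) p`. For axiom (ii), the relation `pfq = dz` turns `m^{dz}` into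
`m^{pf·μ(q)} = q⁻¹ m^{pf} q` by the Peiffer identity, which is `mᵖᶠ q = q mᵈᶻ`.
-/

section CrossedModule

variable {M P : Type*} [Group M] [Group P] {μ : M →* P} {act : M → P → M}

theorem map_mul_eq_mul_map_act (cm1 : ∀ (m : M) (p : P), μ (act m p) = p⁻¹ * μ m * p)
    (m : M) (p : P) : μ m * p = p * μ (act m p) := by
  rw [cm1]
  group

theorem mul_act_mul_map_eq_act_mul
    (act_comp : ∀ (m : M) (p q : P), act m (p * q) = act (act m p) q)
    (cm2 : ∀ m n : M, act n (μ m) = m⁻¹ * n * m) (m q : M) (x : P) :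
    q * act m (x * μ q) = act m x * q := by
  rw [act_comp, cm2]
  group

end CrossedModule

theorem semicore_gives_double_module_general
    (M H P : Type*) [Group M] [Group H] [Group P]
    (μ : M →* P) (φ : H →* P)
    (act : M → P → M)
    (act_comp : ∀ (m : M) (p q : P), act m (p * q) = act (act m p) q)
    (cm1 : ∀ (m : M) (p : P), μ (act m p) = p⁻¹ * μ m * p)
    (cm2 : ∀ m n : M, act n (μ m) = m⁻¹ * n * m) :
    -- axiom (i): `md = d mᵈ` and `mp = p mᵖ` evaluated in `P`
    (∀ (m : M) (d : H), μ m * φ d = φ d * μ (act m (φ d))) ∧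
    (∀ (m : M) (p : P), μ m * p = p * μ (act m p)) ∧
    -- axiom (ii): `pfq = dz` in `P` implies `mᵖᶠ q = q mᵈᶻ` in `M`
    (∀ (m q : M) (p z : P) (d f : H),
      p * (φ f * μ q) = φ d * z →
      act (act m p) (φ f) * q = q * act (act m (φ d)) z) := by
  refine ⟨fun m d ↦ map_mul_eq_mul_map_act cm1 m (φ d), map_mul_eq_mul_map_act cm1,
    fun m q p z d f hpfq ↦ ?_⟩
  rw [← act_comp, ← act_comp, ← hpfq, ← mul_assoc,
    mul_act_mul_map_eq_act_mul act_comp cm2]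

/-- A (single-object) semicore diagram — `μ : M → P` a crossed module,
`η : M ↪ H`, `φ : H → P` with `φη = μ` and `h⁻¹ η(m) h = η(m^{φ h})` —
determines a double `P`-module with `V = P`: with the crossed-module action of
`P` on `M` and the action `mʰ := m^{φ h}` of `H` on `M`, axioms (i) and (ii)
of a double `P`-module hold. -/
theorem semicore_gives_double_module
    (M H P : Type*) [Group M] [Group H] [Group P]
    (μ : M →* P) (φ : H →* P) (η : M →* H)
    (hη : Function.Injective η) (hφη : φ.comp η = μ)
    (act : M → P → M)
    (act_mul : ∀ (m n : M) (p : P), act (m * n) p = act m p * act n p)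
    (act_one : ∀ p : P, act 1 p = 1)
    (act_comp : ∀ (m : M) (p q : P), act m (p * q) = act (act m p) q)
    (act_id : ∀ m : M, act m 1 = m)
    (cm1 : ∀ (m : M) (p : P), μ (act m p) = p⁻¹ * μ m * p)
    (cm2 : ∀ m n : M, act n (μ m) = m⁻¹ * n * m)
    (hconj : ∀ (h : H) (m : M), h⁻¹ * η m * h = η (act m (φ h))) :
    -- axiom (i): `md = d mᵈ` and `mp = p mᵖ` evaluated in `P`
    (∀ (m : M) (d : H), μ m * φ d = φ d * μ (act m (φ d))) ∧
    (∀ (m : M) (p : P), μ m * p = p * μ (act m p)) ∧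
    -- axiom (ii): `pfq = dz` in `P` implies `mᵖᶠ q = q mᵈᶻ` in `M`
    (∀ (m q : M) (p z : P) (d f : H),
      p * (φ f * μ q) = φ d * z →
      act (act m p) (φ f) * q = q * act (act m (φ d)) z) :=
  semicore_gives_double_module_general M H P μ φ act act_comp cm1 cm2
end
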